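/- arXiv:0904.3953 — 12 statements merged into one kernel-verified Lean document; each statement's English description precedes it below -/
import Mathlib

section
/- Let P be a normal propositional logic program and let M be a set of atoms. Then GL_P(M) consists exactly of those atoms p such that there exists a set of atoms Z for which the guarded atom p:Z is the conclusion (root label) of a guarded resolution proof from g(P) that is admitted by M. -/
/-- A normal logic program clause `head ← posBody, not negBody`. -/
structure Clause (At : Type) where
  head : At
  posBody : Finset At
  negBody : Finset At

/-- `GLop P M p` : `p` belongs to the least model of the Gelfond–Lifschitz reduct `P^M`. -/
inductive GLop {At : Type} (P : Set (Clause At)) (M : Set At) : At → Prop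
  | step (C : Clause At) (hC : C ∈ P) (hneg : ∀ r ∈ C.negBody, r ∉ M)
      (hpos : ∀ q ∈ C.posBody, GLop P M q) : GLop P M C.head

/-- `M` is a stable model of `P`. -/
def IsStable {At : Type} (P : Set (Clause At)) (M : Set At) : Prop :=
  {p | GLop P M p} = M

/-- A guarded Horn clause `head ← body : guard`; a guarded atom is the case `body = ∅`. -/
structure GClause (At : Type) where
  head : At
  body : Finset At
  guard : Finset At

/-- The guarded representation of a program clause. -/
def gC {At : Type} (C : Clause At) : GClause At :=
  ⟨C.head, C.posBody, C.negBody⟩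

/-- Finite labelled binary trees with `GClause` labels. -/
inductive GTree (At : Type) : Type
  | leaf (L : GClause At) : GTree At
  | node (t₁ t₂ : GTree At) (L : GClause At) : GTree At

/-- The label of the root of a tree. -/
def GTree.label {At : Type} : GTree At → GClause At
  | .leaf L => L
  | .node _ _ L => L

/-- The set of all labels occurring in a tree. -/
def GTree.labels {At : Type} : GTree At → Set (GClause At)
  | .leaf L => {L}
  | .node t₁ t₂ L => insert L (t₁.labels ∪ t₂.labels)

/-- `IsGRProof P t` : `t` is a guarded resolution proof from `g(P)`.  Leaves are labelled by
guarded clauses `g(C)` for `C ∈ P` (in particular, guarded atoms when `posBody C = ∅`),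
and each inner node is obtained by guarded unit resolution from a guarded Horn clause
parent and a guarded atom parent. -/
inductive IsGRProof {At : Type} [DecidableEq At] (P : Set (Clause At)) : GTree At → Prop
  | leaf (L : GClause At) (C : Clause At) (hC : C ∈ P) (hL : L = gC C) :
      IsGRProof P (GTree.leaf L)
  | node (t₁ t₂ : GTree At) (h₁ : IsGRProof P t₁) (h₂ : IsGRProof P t₂)
      (q : At) (hq : q ∈ t₁.label.body) (ha : t₂.label.body = ∅)
      (hhead : t₂.label.head = q) :
      IsGRProof P (GTree.node t₁ t₂
        ⟨t₁.label.head, t₁.label.body.erase q, t₁.label.guard ∪ t₂.label.guard⟩)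

/-- The guarded atom `p : S` has a guarded resolution proof from `g(P)`,
i.e. `S` is a support of `p` with respect to `P`. -/
def HasGRProof {At : Type} [DecidableEq At] (P : Set (Clause At)) (p : At) (S : Finset At) : Prop :=
  ∃ t : GTree At, IsGRProof P t ∧ t.label = ⟨p, ∅, S⟩

/-- `M` admits the guarded atom `p : S` (only the guard matters): `M ∩ S = ∅`. -/
def Admits {At : Type} (M : Set At) (S : Finset At) : Prop :=
  ∀ r ∈ S, r ∉ M

/-- `M` satisfies the body of the clause `C`. -/
def SatBody {At : Type} (M : Set At) (C : Clause At) : Prop :=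
  (∀ q ∈ C.posBody, q ∈ M) ∧ (∀ r ∈ C.negBody, r ∉ M)

/-- `M` is a model of `P`. -/
def IsModel {At : Type} (P : Set (Clause At)) (M : Set At) : Prop :=
  ∀ C ∈ P, SatBody M C → C.head ∈ M

/-- `M` is a supported model of `P`. -/
def IsSupported {At : Type} (P : Set (Clause At)) (M : Set At) : Prop :=
  IsModel P M ∧ ∀ p ∈ M, ∃ C ∈ P, C.head = p ∧ SatBody M C


lemma grproof_backward {At : Type} [DecidableEq At] (P : Set (Clause At)) (M : Set At)
    (t : GTree At) (ht : IsGRProof P t) :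
    Admits M t.label.guard → (∀ q ∈ t.label.body, GLop P M q) → GLop P M t.label.head := by
  induction ht with
  | leaf L C hC hL =>
    intro hadm hbody
    subst hL
    simp only [GTree.label, gC] at hadm hbody ⊢
    exact GLop.step C hC (fun r hr => hadm r hr) (fun q hq => hbody q hq)
  | node t₁ t₂ h₁ h₂ q hq ha hhead ih₁ ih₂ =>
    intro hadm hbody
    simp only [GTree.label] at hadm hbody ⊢
    have hadm₁ : Admits M t₁.label.guard := fun r hr => hadm r (Finset.mem_union_left _ hr)
    have hadm₂ : Admits M t₂.label.guard := fun r hr => hadm r (Finset.mem_union_right _ hr)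
    have hqGL : GLop P M q := hhead ▸ ih₂ hadm₂ (by simp [ha])
    refine ih₁ hadm₁ (fun q' hq'' => ?_)
    by_cases h : q' = q
    · exact h ▸ hqGL
    · exact hbody q' (Finset.mem_erase.mpr ⟨h, hq''⟩)

lemma grproof_combine {At : Type} [DecidableEq At] (P : Set (Clause At)) (M : Set At)
    (B : Finset At) : ∀ (p : At) (S : Finset At) (t : GTree At),
    IsGRProof P t → t.label = ⟨p, B, S⟩ → Admits M S →
    (∀ q ∈ B, ∃ Z, HasGRProof P q Z ∧ Admits M Z) →
    ∃ Z, HasGRProof P p Z ∧ Admits M Z := by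
  induction B using Finset.strongInduction with
  | _ B ih =>
    intro p S t ht hlabel hadm hqs
    rcases B.eq_empty_or_nonempty with rfl | ⟨q, hq⟩
    · exact ⟨S, ⟨t, ht, hlabel⟩, hadm⟩
    · obtain ⟨Z, ⟨t₂, ht₂, hl₂⟩, hZ⟩ := hqs q hq
      have hnode : IsGRProof P (GTree.node t t₂
          ⟨t.label.head, t.label.body.erase q, t.label.guard ∪ t₂.label.guard⟩) :=
        IsGRProof.node t t₂ ht ht₂ q (by rw [hlabel]; exact hq) (by rw [hl₂]) (by rw [hl₂])
      refine ih (B.erase q) (Finset.erase_ssubset hq) p (S ∪ Z) _ hnode ?_ ?_ ?_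
      · show GClause.mk t.label.head (t.label.body.erase q) (t.label.guard ∪ t₂.label.guard) = _
        rw [hlabel, hl₂]
      · intro r hr
        rcases Finset.mem_union.mp hr with h | h
        exacts [hadm r h, hZ r h]
      · intro q' hq'
        exact hqs q' (Finset.mem_of_mem_erase hq')

theorem GLop_eq_guarded_provable {At : Type} [DecidableEq At]
    (P : Set (Clause At)) (M : Set At) :
    {p | GLop P M p} = {p | ∃ Z : Finset At, HasGRProof P p Z ∧ Admits M Z} := by
  ext p
  constructor
  · intro h
    induction h with
    | step C hC hneg hpos ih =>
      exact grproof_combine P M C.posBody C.head C.negBody (GTree.leaf (gC C))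
        (IsGRProof.leaf _ C hC rfl) rfl hneg ih
  · rintro ⟨Z, ⟨t, ht, hl⟩, hadm⟩
    have := grproof_backward P M t ht (by rw [hl]; exact hadm) (by rw [hl]; simp)
    rwa [hl] at this
end

section
/- Let P be a normal propositional logic program and let M be a set of atoms. Then M is a stable model of P if and only if (1) for every p ∈ M there is a set of atoms S such that there is a guarded resolution proof of p:S from g(P) admitted by M, and (2) for every p ∉ M there is no set of atoms S such that there is a guarded resolution proof of p:S from g(P) admitted by M. -/
lemma resolveAll {At : Type} [DecidableEq At] (P : Set (Clause At)) (M : Set At) :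
    ∀ b : Finset At, ∀ h : At, ∀ g : Finset At, ∀ t : GTree At, IsGRProof P t →
      t.label = ⟨h, b, g⟩ → Admits M g →
      (∀ q ∈ b, ∃ S, HasGRProof P q S ∧ Admits M S) →
      ∃ S, HasGRProof P h S ∧ Admits M S := by
  intro b
  induction b using Finset.strongInduction with
  | _ b ih =>
    intro h g t ht hlab hadm hbody
    rcases b.eq_empty_or_nonempty with rfl | ⟨q, hq⟩
    · exact ⟨g, ⟨t, ht, hlab⟩, hadm⟩
    · obtain ⟨Sq, ⟨tq, htq, hlq⟩, hadmq⟩ := hbody q hq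
      have hq' : q ∈ t.label.body := by rw [hlab]; exact hq
      have ha : tq.label.body = ∅ := by rw [hlq]
      have hh : tq.label.head = q := by rw [hlq]
      have hnode := IsGRProof.node t tq ht htq q hq' ha hh
      refine ih (b.erase q) (Finset.erase_ssubset hq) h (g ∪ Sq) _ hnode ?_ ?_ ?_
      · show (⟨t.label.head, t.label.body.erase q, t.label.guard ∪ tq.label.guard⟩ : GClause At) = _
        rw [hlab, hlq]
      · intro r hr
        rcases Finset.mem_union.mp hr with hr | hr
        · exact hadm r hr
        · exact hadmq r hr
      · intro r hr
        exact hbody r (Finset.mem_of_mem_erase hr)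

lemma glop_to_proof {At : Type} [DecidableEq At] {P : Set (Clause At)} {M : Set At} {p : At}
    (h : GLop P M p) : ∃ S, HasGRProof P p S ∧ Admits M S := by
  induction h with
  | step C hC hneg hpos ih =>
    exact resolveAll P M C.posBody C.head C.negBody (GTree.leaf (gC C))
      (IsGRProof.leaf _ C hC rfl) rfl hneg ih

lemma proof_to_glop {At : Type} [DecidableEq At] {P : Set (Clause At)} {M : Set At}
    {t : GTree At} (ht : IsGRProof P t) :
    Admits M t.label.guard → (∀ q ∈ t.label.body, GLop P M q) →
    GLop P M t.label.head := by
  induction ht with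
  | leaf L C hC hL =>
    intro hadm hbody
    subst hL
    exact GLop.step C hC hadm hbody
  | node t₁ t₂ h₁ h₂ q hq ha hh ih₁ ih₂ =>
    intro hadm hbody
    simp only [GTree.label] at hadm hbody ⊢
    have hadm₁ : Admits M t₁.label.guard := fun r hr =>
      hadm r (Finset.mem_union_left _ hr)
    have hadm₂ : Admits M t₂.label.guard := fun r hr =>
      hadm r (Finset.mem_union_right _ hr)
    have hqG : GLop P M q := by
      rw [← hh]
      exact ih₂ hadm₂ (by rw [ha]; intro r hr; simp at hr)
    refine ih₁ hadm₁ ?_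
    intro r hr
    by_cases hrq : r = q
    · exact hrq ▸ hqG
    · exact hbody r (Finset.mem_erase.mpr ⟨hrq, hr⟩)

theorem stable_iff_guarded_proofs {At : Type} [DecidableEq At]
    (P : Set (Clause At)) (M : Set At) :
    IsStable P M ↔
      ((∀ p ∈ M, ∃ S : Finset At, HasGRProof P p S ∧ Admits M S) ∧
       (∀ p ∉ M, ¬ ∃ S : Finset At, HasGRProof P p S ∧ Admits M S)) := by
  constructor
  · intro hst
    constructor
    · intro p hp
      have : GLop P M p := by rw [IsStable] at hst; rw [← hst] at hp; exact hp
      exact glop_to_proof this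
    · rintro p hp ⟨S, ⟨t, ht, hl⟩, hadm⟩
      apply hp
      have hG : GLop P M p := by
        have := proof_to_glop ht (by rw [hl]; exact hadm)
          (by rw [hl]; intro q hq; simp at hq)
        rwa [hl] at this
      rw [IsStable] at hst
      rw [← hst]
      exact hG
  · rintro ⟨h1, h2⟩
    ext p
    constructor
    · intro hG
      by_contra hp
      exact h2 p hp (glop_to_proof hG)
    · intro hp
      obtain ⟨S, ⟨t, ht, hl⟩, hadm⟩ := h1 p hp
      have := proof_to_glop ht (by rw [hl]; exact hadm)
        (by rw [hl]; intro q hq; simp at hq)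
      rwa [hl] at this
end

section
/- Let P be a Horn program, i.e., a normal logic program in which every clause has empty negative body. Then an atom p belongs to the least model of P if and only if there is a guarded resolution proof of the guarded atom p:∅ from g(P). -/
/-- The least model of a Horn program, as the least fixed point of its
one-step provability operator. -/
inductive HornLM {At : Type} (P : Set (Clause At)) : At → Prop
  | step (C : Clause At) (hC : C ∈ P) (hpos : ∀ q ∈ C.posBody, HornLM P q) :
      HornLM P C.head


lemma grproof_sound {At : Type} [DecidableEq At] {P : Set (Clause At)}
    {t : GTree At} (ht : IsGRProof P t)
    (hb : ∀ q ∈ t.label.body, HornLM P q) : HornLM P t.label.head := by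
  induction ht with
  | leaf L C hC hL =>
    subst hL
    exact HornLM.step C hC hb
  | node t₁ t₂ h₁ h₂ q hq ha hhead ih₁ ih₂ =>
    simp only [GTree.label] at hb ⊢
    apply ih₁
    intro r hr
    by_cases hrq : r = q
    · subst hrq
      have := ih₂ (by simp [ha])
      rwa [hhead] at this
    · exact hb r (Finset.mem_erase.mpr ⟨hrq, hr⟩)

lemma resolve_all {At : Type} [DecidableEq At] {P : Set (Clause At)} {h : At}
    (b : Finset At) (t : GTree At) (ht : IsGRProof P t)
    (hl : t.label = ⟨h, b, ∅⟩) (hb : ∀ q ∈ b, HasGRProof P q ∅) :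
    HasGRProof P h ∅ := by
  induction b using Finset.strongInduction generalizing t with
  | _ b ih =>
    rcases b.eq_empty_or_nonempty with rfl | ⟨q, hq⟩
    · exact ⟨t, ht, hl⟩
    · obtain ⟨t₂, ht₂, hl₂⟩ := hb q hq
      have hq' : q ∈ t.label.body := by rw [hl]; exact hq
      have hnode := IsGRProof.node t t₂ ht ht₂ q hq' (by rw [hl₂]) (by rw [hl₂])
      refine ih (b.erase q) (Finset.erase_ssubset hq) _ hnode ?_ ?_
      · show GClause.mk t.label.head (t.label.body.erase q) (t.label.guard ∪ t₂.label.guard) = _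
        rw [hl, hl₂]; simp
      · intro r hr
        exact hb r (Finset.mem_of_mem_erase hr)

theorem horn_least_model_iff_guarded_proof {At : Type} [DecidableEq At]
    (P : Set (Clause At)) (hHorn : ∀ C ∈ P, C.negBody = ∅) (p : At) :
    HornLM P p ↔ HasGRProof P p ∅ := by
  constructor
  · intro hp
    induction hp with
    | step C hC hpos ih =>
      refine resolve_all C.posBody (GTree.leaf (gC C)) (IsGRProof.leaf _ C hC rfl) ?_ ih
      simp [GTree.label, gC, hHorn C hC]
  · rintro ⟨t, ht, hl⟩
    have := grproof_sound ht (by rw [hl]; simp)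
    rwa [hl] at this
end

section
/- Let P be a normal propositional logic program and M a set of atoms. Then M is a stable model of P if and only if M has levels with respect to P. -/
/-- `M` has levels with respect to `P`, witnessed by an ordinal-valued rank function on `M`. -/
def HasLevels {At : Type} (P : Set (Clause At)) (M : Set At) : Prop :=
  IsModel P M ∧ ∃ rk : {x // x ∈ M} → Ordinal.{0},
    ∀ p, ∀ hp : p ∈ M, ∃ C ∈ P, C.head = p ∧
      ∃ hq : ∀ q ∈ C.posBody, q ∈ M,
        (∀ r ∈ C.negBody, r ∉ M) ∧
        ∀ q, ∀ hqC : q ∈ C.posBody, rk ⟨q, hq q hqC⟩ < rk ⟨p, hp⟩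

/-- Graded version of `GLop`: derivable with height at most `n`. -/
inductive GLopN {At : Type} (P : Set (Clause At)) (M : Set At) : ℕ → At → Prop
  | step (n : ℕ) (C : Clause At) (hC : C ∈ P) (hneg : ∀ r ∈ C.negBody, r ∉ M)
      (hpos : ∀ q ∈ C.posBody, GLopN P M n q) : GLopN P M (n + 1) C.head

theorem GLopN_succ {At : Type} {P : Set (Clause At)} {M : Set At} {n : ℕ} {p : At}
    (h : GLopN P M n p) : GLopN P M (n + 1) p := by
  induction h with
  | step n C hC hneg hpos ih => exact GLopN.step (n + 1) C hC hneg ih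

theorem GLopN_mono {At : Type} {P : Set (Clause At)} {M : Set At} {m n : ℕ} {p : At}
    (hmn : m ≤ n) (h : GLopN P M m p) : GLopN P M n p := by
  induction hmn with
  | refl => exact h
  | step _ ih => exact GLopN_succ ih

theorem GLop_of_GLopN {At : Type} {P : Set (Clause At)} {M : Set At} {n : ℕ} {p : At}
    (h : GLopN P M n p) : GLop P M p := by
  induction h with
  | step n C hC hneg hpos ih => exact GLop.step C hC hneg ih

theorem GLopN_of_GLop {At : Type} {P : Set (Clause At)} {M : Set At} {p : At}
    (h : GLop P M p) : ∃ n, GLopN P M n p := by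
  induction h with
  | step C hC hneg hpos ih =>
    choose f hf using ih
    refine ⟨(C.posBody.attach.sup fun q => f q.1 q.2) + 1, ?_⟩
    refine GLopN.step _ C hC hneg (fun q hq => ?_)
    exact GLopN_mono (Finset.le_sup (Finset.mem_attach _ ⟨q, hq⟩)) (hf q hq)

theorem stable_iff_hasLevels {At : Type}
    (P : Set (Clause At)) (M : Set At) :
    IsStable P M ↔ HasLevels P M := by
  constructor
  · intro hst
    have hmem : ∀ p, GLop P M p ↔ p ∈ M := fun p => Set.ext_iff.mp hst p
    have hmodel : IsModel P M := by
      intro C hC ⟨hpos, hneg⟩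
      exact (hmem C.head).1 (GLop.step C hC hneg (fun q hq => (hmem q).2 (hpos q hq)))
    refine ⟨hmodel, fun p => ((sInf {n | GLopN P M n p.1} : ℕ) : Ordinal), ?_⟩
    intro p hp
    have hne : {n | GLopN P M n p}.Nonempty := GLopN_of_GLop ((hmem p).2 hp)
    have hmin : GLopN P M (sInf {n | GLopN P M n p}) p := Nat.sInf_mem hne
    generalize hE : sInf {n | GLopN P M n p} = N at hmin
    cases hmin with
    | step n C hC hneg hpos =>
      have hqM : ∀ q ∈ C.posBody, q ∈ M := fun q hq => (hmem q).1 (GLop_of_GLopN (hpos q hq))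
      refine ⟨C, hC, rfl, hqM, hneg, ?_⟩
      intro q hqC
      have h1 : sInf {k | GLopN P M k q} ≤ n := Nat.sInf_le (hpos q hqC)
      have h2 : sInf {k | GLopN P M k C.head} = n + 1 := hE
      show ((sInf {k | GLopN P M k q} : ℕ) : Ordinal) <
        ((sInf {k | GLopN P M k C.head} : ℕ) : Ordinal)
      rw [h2]
      exact_mod_cast Nat.lt_succ_of_le h1
  · rintro ⟨hmodel, rk, hrk⟩
    have h1 : ∀ p, GLop P M p → p ∈ M := by
      intro p h
      induction h with
      | step C hC hneg hpos ih => exact hmodel C hC ⟨ih, hneg⟩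
    have h2 : ∀ p : {x // x ∈ M}, GLop P M p.1 := by
      intro p
      induction p using WellFounded.induction (InvImage.wf rk Ordinal.lt_wf) with
      | _ p ih =>
        obtain ⟨C, hC, hhead, hq, hneg, hlt⟩ := hrk p.1 p.2
        rw [← hhead]
        exact GLop.step C hC hneg (fun q hqC => ih ⟨q, hq q hqC⟩ (hlt q hqC))
    apply Set.eq_of_subset_of_subset
    · intro p hp; exact h1 p hp
    · intro p hp; exact h2 ⟨p, hp⟩
end

section
/- Let P be a normal propositional logic program and M a set of atoms. Then M is a stable model of P if and only if M has levels with respect to P witnessed by a rank function taking values in the natural numbers; in other words, in the definition of having levels it suffices to consider rank functions rk : M → ℕ. -/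
/-- `M` has levels with respect to `P`, witnessed by a rank function `rk : M → ℕ`. -/
def HasLevelsNat {At : Type} (P : Set (Clause At)) (M : Set At) (rk : {x // x ∈ M} → ℕ) : Prop :=
  IsModel P M ∧
    ∀ p, ∀ hp : p ∈ M, ∃ C ∈ P, C.head = p ∧
      ∃ hq : ∀ q ∈ C.posBody, q ∈ M,
        (∀ r ∈ C.negBody, r ∉ M) ∧
        ∀ q, ∀ hqC : q ∈ C.posBody, rk ⟨q, hq q hqC⟩ < rk ⟨p, hp⟩

/-- Ranked version of `GLop`. -/
inductive GLN {At : Type} (P : Set (Clause At)) (M : Set At) : ℕ → At → Prop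
  | step (n : ℕ) (C : Clause At) (hC : C ∈ P) (hneg : ∀ r ∈ C.negBody, r ∉ M)
      (hpos : ∀ q ∈ C.posBody, GLN P M n q) : GLN P M (n + 1) C.head

lemma GLN.mono {At : Type} {P : Set (Clause At)} {M : Set At} {m n : ℕ} {p : At}
    (h : GLN P M m p) (hmn : m ≤ n) : GLN P M n p := by
  induction h generalizing n with
  | step k C hC hneg hpos ih =>
    cases n with
    | zero => omega
    | succ j => exact .step j C hC hneg (fun q hq => ih q hq (by omega))

lemma GLN.toGLop {At : Type} {P : Set (Clause At)} {M : Set At} {n : ℕ} {p : At}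
    (h : GLN P M n p) : GLop P M p := by
  induction h with
  | step k C hC hneg hpos ih => exact .step C hC hneg ih

lemma GLop.toGLN {At : Type} {P : Set (Clause At)} {M : Set At} {p : At}
    (h : GLop P M p) : ∃ n, GLN P M n p := by
  classical
  induction h with
  | step C hC hneg hpos ih =>
    let f : At → ℕ := fun q => if h : ∃ n, GLN P M n q then h.choose else 0
    refine ⟨C.posBody.sup f + 1, .step _ C hC hneg fun q hq => ?_⟩
    have hq' := ih q hq
    have h1 : GLN P M (f q) q := by
      simp only [f, dif_pos hq']; exact hq'.choose_spec
    exact h1.mono (Finset.le_sup hq)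

lemma GLN.inv {At : Type} {P : Set (Clause At)} {M : Set At} {n : ℕ} {p : At}
    (h : GLN P M n p) :
    ∃ k C, n = k + 1 ∧ C ∈ P ∧ C.head = p ∧ (∀ r ∈ C.negBody, r ∉ M) ∧
      ∀ q ∈ C.posBody, GLN P M k q := by
  cases h with
  | step k C hC hneg hpos => exact ⟨k, C, rfl, hC, rfl, hneg, hpos⟩

theorem stable_iff_hasLevels_nat {At : Type}
    (P : Set (Clause At)) (M : Set At) :
    IsStable P M ↔ ∃ rk : {x // x ∈ M} → ℕ, HasLevelsNat P M rk := by
  classical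
  constructor
  · intro hstab
    have hmem : ∀ p, p ∈ M ↔ GLop P M p :=
      fun p => (Set.ext_iff.mp hstab p).symm
    have hex : ∀ x : {x // x ∈ M}, ∃ n, GLN P M n x.1 :=
      fun x => ((hmem x.1).mp x.2).toGLN
    refine ⟨fun x => Nat.find (hex x), ?_, ?_⟩
    · intro C hC ⟨hpos, hneg⟩
      exact (hmem _).mpr (.step C hC hneg fun q hq => (hmem q).mp (hpos q hq))
    · intro p hp
      obtain ⟨k, C, hkeq, hC, hhead, hneg, hpos⟩ := (Nat.find_spec (hex ⟨p, hp⟩)).inv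
      have hqM : ∀ q ∈ C.posBody, q ∈ M :=
        fun q hq => (hmem q).mpr (hpos q hq).toGLop
      refine ⟨C, hC, hhead, hqM, hneg, fun q hqC => ?_⟩
      have h1 : Nat.find (hex ⟨q, hqM q hqC⟩) ≤ k := Nat.find_le (hpos q hqC)
      dsimp only
      omega
  · rintro ⟨rk, hmodel, hlev⟩
    ext p
    simp only [Set.mem_setOf_eq]
    constructor
    · intro h
      induction h with
      | step C hC hneg hpos ih => exact hmodel C hC ⟨ih, hneg⟩
    · intro hp
      have key : ∀ n, ∀ p, ∀ hp : p ∈ M, rk ⟨p, hp⟩ = n → GLop P M p := by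
        intro n
        induction n using Nat.strong_induction_on with
        | _ n ih =>
          intro p hp hrk
          obtain ⟨C, hC, hhead, hq, hneg, hlt⟩ := hlev p hp
          have : GLop P M C.head :=
            .step C hC hneg fun q hqC =>
              ih _ (hrk ▸ hlt q hqC) q (hq q hqC) rfl
          exact hhead ▸ this
      exact key _ p hp rfl
end

section
/- (Erdem–Lifschitz) Let P be a normal propositional logic program and M a set of atoms. If P is tight on M and M is a supported model of P, then M is a stable model of P. -/
/-- `P` is tight on `M`. -/
def TightOn {At : Type} (P : Set (Clause At)) (M : Set At) : Prop :=
  ∃ rk : {x // x ∈ M} → Ordinal.{0},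
    ∀ C ∈ P, ∀ hh : C.head ∈ M, ∀ hq : ∀ q ∈ C.posBody, q ∈ M,
      ∀ q, ∀ hqC : q ∈ C.posBody, rk ⟨q, hq q hqC⟩ < rk ⟨C.head, hh⟩

theorem erdem_lifschitz {At : Type}
    (P : Set (Clause At)) (M : Set At)
    (htight : TightOn P M) (hsupp : IsSupported P M) :
    IsStable P M := by
  obtain ⟨rk, hrk⟩ := htight
  obtain ⟨hmod, hsup⟩ := hsupp
  apply Set.eq_of_subset_of_subset
  · intro p hp
    induction hp with
    | step C hC hneg hpos ih =>
      exact hmod C hC ⟨ih, hneg⟩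
  · intro p hp
    have key : ∀ o : Ordinal, ∀ p, ∀ hp : p ∈ M, rk ⟨p, hp⟩ = o → GLop P M p := by
      intro o
      induction o using Ordinal.induction with
      | h o ih =>
        intro p hp hpo
        obtain ⟨C, hC, hh, hbpos, hbneg⟩ := hsup p hp
        subst hh
        refine GLop.step C hC hbneg (fun q hq => ?_)
        exact ih (rk ⟨q, hbpos q hq⟩) (hpo ▸ hrk C hC hp hbpos q hq) q (hbpos q hq) rfl
    exact key (rk ⟨p, hp⟩) p hp rfl
end

section
/- (Erdem–Lifschitz) Let P be a normal propositional logic program. If P is tight on every supported model M of P, then the class of supported models of P coincides with the class of stable models of P. -/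
theorem erdem_lifschitz_succinct {At : Type}
    (P : Set (Clause At))
    (htight : ∀ M : Set At, IsSupported P M → TightOn P M) :
    ∀ M : Set At, IsSupported P M ↔ IsStable P M := by
  intro M
  constructor
  · intro hsup
    obtain ⟨rk, hrk⟩ := htight M hsup
    have key : ∀ o : Ordinal, ∀ x : {x // x ∈ M}, rk x = o → GLop P M x.val := by
      intro o
      induction o using Ordinal.induction with
      | h o IH =>
        intro x hx
        obtain ⟨C, hC, hhead, hsat⟩ := hsup.2 x.1 x.2
        have hhm : C.head ∈ M := hhead ▸ x.2
        have hpos : ∀ q ∈ C.posBody, GLop P M q := by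
          intro q hq
          exact IH (rk ⟨q, hsat.1 q hq⟩)
            (by
              have := hrk C hC hhm hsat.1 q hq
              have hx2 : rk ⟨C.head, hhm⟩ = o := by
                have : (⟨C.head, hhm⟩ : {x // x ∈ M}) = x := Subtype.ext hhead
                rw [this, hx]
              rw [← hx2]; exact this) ⟨q, hsat.1 q hq⟩ rfl
        have := GLop.step C hC hsat.2 hpos
        rwa [hhead] at this
    ext p
    simp only [Set.mem_setOf_eq]
    constructor
    · intro hgl
      induction hgl with
      | step C hC hneg hpos ih =>
        exact hsup.1 C hC ⟨ih, hneg⟩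
    · intro hp
      exact key (rk ⟨p, hp⟩) ⟨p, hp⟩ rfl
  · intro hst
    constructor
    · intro C hC hsat
      rw [← hst]
      have hpos : ∀ q ∈ C.posBody, GLop P M q := by
        intro q hq
        have := hsat.1 q hq
        rwa [← hst] at this
      exact GLop.step C hC hsat.2 hpos
    · intro p hp
      rw [← hst] at hp
      cases hp with
      | step C hC hneg hpos =>
        refine ⟨C, hC, rfl, ?_, hneg⟩
        intro q hq
        rw [← hst]
        exact hpos q hq
end

section
/- Every stable model of a normal propositional logic program P is a supported model of P. -/
theorem stable_is_supported {At : Type}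
    (P : Set (Clause At)) (M : Set At) (hM : IsStable P M) :
    IsSupported P M := by
  have hmem : ∀ p, GLop P M p ↔ p ∈ M := fun p => by
    constructor
    · intro h; rw [← hM]; exact h
    · intro h; rw [← hM] at h; exact h
  constructor
  · intro C hC hsat
    rw [← hmem]
    exact GLop.step C hC hsat.2 (fun q hq => (hmem q).mpr (hsat.1 q hq))
  · intro p hp
    have h := (hmem p).mpr hp
    cases h with
    | step C hC hneg hpos =>
      exact ⟨C, hC, rfl, fun q hq => (hmem q).mp (hpos q hq), hneg⟩
end

section
/- (Fages) Let P be a normal propositional logic program. If P is tight, then the class of supported models of P coincides with the class of stable models of P. -/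
/-- `P` is tight. -/
def Tight {At : Type} (P : Set (Clause At)) : Prop :=
  ∃ rk : At → Ordinal.{0}, ∀ C ∈ P, ∀ q ∈ C.posBody, rk q < rk C.head

theorem fages {At : Type}
    (P : Set (Clause At)) (htight : Tight P) :
    ∀ M : Set At, IsSupported P M ↔ IsStable P M := by
  intro M
  constructor
  · rintro ⟨hmod, hsup⟩
    obtain ⟨rk, hrk⟩ := htight
    have key : ∀ o : Ordinal, ∀ p, rk p = o → p ∈ M → GLop P M p := by
      intro o
      induction o using Ordinal.induction with
      | h o IH =>
        intro p hp hpM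
        obtain ⟨C, hCP, hhead, hsat⟩ := hsup p hpM
        subst hhead
        exact GLop.step C hCP hsat.2
          (fun q hq => IH (rk q) (hp ▸ hrk C hCP q hq) q rfl (hsat.1 q hq))
    apply Set.eq_of_subset_of_subset
    · intro p hp
      induction hp with
      | step C hC hneg hpos ih =>
        exact hmod C hC ⟨ih, hneg⟩
    · exact fun p hp => key (rk p) p rfl hp
  · intro hst
    constructor
    · intro C hC hsat
      have : GLop P M C.head := GLop.step C hC hsat.2 (fun q hq => by
        show q ∈ {p | GLop P M p}
        rw [hst]; exact hsat.1 q hq)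
      exact hst ▸ this
    · intro p hp
      have hG : GLop P M p := by rw [← hst] at hp; exact hp
      cases hG with
      | step C hC hneg hpos =>
        exact ⟨C, hC, rfl, fun q hq => hst ▸ hpos q hq, hneg⟩
end

section
/- Let P and P' be normal propositional logic programs over the same set of atoms. If exactly the same guarded atoms p:S possess guarded resolution proofs from g(P) and from g(P'), then P and P' are equivalent, i.e., they have the same stable models. -/
lemma grproof_sound_s13 {At : Type} [DecidableEq At] (P : Set (Clause At)) (M : Set At)
    {t : GTree At} (ht : IsGRProof P t) :
    ∀ p B S, t.label = ⟨p, B, S⟩ → Admits M S → (∀ q ∈ B, GLop P M q) → GLop P M p := by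
  induction ht with
  | leaf L C hC hL =>
    intro p B S hlab hadm hbody
    subst hL
    simp only [GTree.label, gC, GClause.mk.injEq] at hlab
    obtain ⟨h1, h2, h3⟩ := hlab
    subst h1; subst h2; subst h3
    exact GLop.step C hC hadm hbody
  | node t₁ t₂ h₁ h₂ q hq ha hhead ih₁ ih₂ =>
    intro p B S hlab hadm hbody
    simp only [GTree.label, GClause.mk.injEq] at hlab
    obtain ⟨h1, h2, h3⟩ := hlab
    have hq2 : GLop P M q := by
      refine ih₂ q ∅ t₂.label.guard ?_ ?_ (by simp)
      · rw [← hhead, ← ha]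
      · intro r hr; exact hadm r (by rw [← h3]; exact Finset.mem_union_right _ hr) 
    subst h1
    refine ih₁ _ t₁.label.body t₁.label.guard rfl ?_ ?_
    · intro r hr; exact hadm r (by rw [← h3]; exact Finset.mem_union_left _ hr)
    · intro q' hq'
      by_cases hqq : q' = q
      · subst hqq; exact hq2
      · exact hbody q' (by rw [← h2]; exact Finset.mem_erase.2 ⟨hqq, hq'⟩)

lemma grproof_build {At : Type} [DecidableEq At] (P : Set (Clause At)) (M : Set At) :
    ∀ (n : ℕ) (B : Finset At), B.card = n → ∀ (p : At) (S : Finset At),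
      (∃ t : GTree At, IsGRProof P t ∧ t.label = ⟨p, B, S⟩) → Admits M S →
      (∀ q ∈ B, ∃ Sq, HasGRProof P q Sq ∧ Admits M Sq) →
      ∃ S', HasGRProof P p S' ∧ Admits M S' := by
  intro n
  induction n with
  | zero =>
    intro B hB p S ht hadm _
    rw [Finset.card_eq_zero] at hB
    subst hB
    exact ⟨S, ht, hadm⟩
  | succ n ih =>
    intro B hB p S ⟨t, ht, hlab⟩ hadm hbody
    have hne : B.Nonempty := Finset.card_pos.1 (by omega)
    obtain ⟨q, hq⟩ := hne
    obtain ⟨Sq, ⟨tq, htq, hlabq⟩, hadmq⟩ := hbody q hq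
    have e1 : t.label.head = p := by rw [hlab]
    have e2 : t.label.body = B := by rw [hlab]
    have e3 : t.label.guard = S := by rw [hlab]
    have g1 : tq.label.guard = Sq := by rw [hlabq]
    have hnode : IsGRProof P (GTree.node t tq
        ⟨t.label.head, t.label.body.erase q, t.label.guard ∪ tq.label.guard⟩) :=
      IsGRProof.node t tq ht htq q (by rw [hlab]; exact hq) (by rw [hlabq])
        (by rw [hlabq])
    refine ih (B.erase q) (by rw [Finset.card_erase_of_mem hq, hB]; omega) p (S ∪ Sq)
      ⟨_, hnode, ?_⟩ ?_ ?_
    · show (⟨t.label.head, t.label.body.erase q, t.label.guard ∪ tq.label.guard⟩ : GClause At)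
        = ⟨p, B.erase q, S ∪ Sq⟩
      rw [e1, e2, e3, g1]
    · intro r hr
      rcases Finset.mem_union.1 hr with hr | hr
      · exact hadm r hr
      · exact hadmq r hr
    · intro q' hq'
      exact hbody q' (Finset.mem_of_mem_erase hq')

lemma GLop_iff_support {At : Type} [DecidableEq At] (P : Set (Clause At)) (M : Set At) (p : At) :
    GLop P M p ↔ ∃ S, HasGRProof P p S ∧ Admits M S := by
  constructor
  · intro h
    induction h with
    | step C hC hneg hpos ih =>
      refine grproof_build P M C.posBody.card C.posBody rfl C.head C.negBody
        ⟨GTree.leaf (gC C), IsGRProof.leaf _ C hC rfl, rfl⟩ hneg ih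
  · rintro ⟨S, ⟨t, ht, hlab⟩, hadm⟩
    exact grproof_sound_s13 P M ht p ∅ S hlab hadm (by simp)

theorem same_guarded_atoms_implies_equivalent {At : Type} [DecidableEq At]
    (P P' : Set (Clause At))
    (h : ∀ (p : At) (S : Finset At), HasGRProof P p S ↔ HasGRProof P' p S) :
    {M : Set At | IsStable P M} = {M : Set At | IsStable P' M} := by
  have key : ∀ M : Set At, {p | GLop P M p} = {p | GLop P' M p} := by
    intro M
    ext p
    simp only [Set.mem_setOf_eq, GLop_iff_support]
    constructor <;> rintro ⟨S, hS, hadm⟩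
    · exact ⟨S, (h p S).1 hS, hadm⟩
    · exact ⟨S, (h p S).2 hS, hadm⟩
  ext M
  simp only [Set.mem_setOf_eq, IsStable, key M]
end

section
/- (Dung) For every normal propositional logic program P there exists a purely negative program P' (a program all of whose clauses have empty positive body) such that P and P' are equivalent, i.e., Stab(P) = Stab(P'). -/
theorem glop_support {At : Type} {P : Set (Clause At)} {M : Set At} {p : At}
    (h : GLop P M p) :
    ∃ S : Finset At, (∀ r ∈ S, r ∉ M) ∧ ∀ M' : Set At, Admits M' S → GLop P M' p := by
  classical
  induction h with
  | step C hC hneg hpos ih =>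
    choose f hf1 hf2 using ih
    refine ⟨C.negBody ∪ C.posBody.attach.sup (fun q => f q.1 q.2), ?_, ?_⟩
    · intro r hr
      rcases Finset.mem_union.mp hr with hr | hr
      · exact hneg r hr
      · rcases Finset.mem_sup.mp hr with ⟨q, _, hq⟩
        exact hf1 q.1 q.2 r hq
    · intro M' hM'
      refine GLop.step C hC ?_ ?_
      · intro r hr
        exact hM' r (Finset.mem_union_left _ hr)
      · intro q hq
        refine hf2 q hq M' ?_
        intro r hr
        exact hM' r (Finset.mem_union_right _
          (Finset.le_sup (f := fun q : {x // x ∈ C.posBody} => f q.1 q.2)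
            (Finset.mem_attach _ ⟨q, hq⟩) hr))

theorem dung_purely_negative {At : Type}
    (P : Set (Clause At)) :
    ∃ P' : Set (Clause At), (∀ C ∈ P', C.posBody = ∅) ∧
      {M : Set At | IsStable P M} = {M : Set At | IsStable P' M} := by
  classical
  set P' : Set (Clause At) :=
    {C | C.posBody = ∅ ∧ ∀ M : Set At, Admits M C.negBody → GLop P M C.head} with hP'
  have key : ∀ M : Set At, {p | GLop P M p} = {p | GLop P' M p} := by
    intro M
    ext p
    constructor
    · intro h
      obtain ⟨S, hS1, hS2⟩ := glop_support h
      have hC : (⟨p, ∅, S⟩ : Clause At) ∈ P' := ⟨rfl, fun M' hM' => hS2 M' hM'⟩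
      exact GLop.step ⟨p, ∅, S⟩ hC hS1 (fun q hq => absurd hq (Finset.notMem_empty q))
    · intro h
      cases h with
      | step C hC hneg _ =>
        exact hC.2 M hneg
  refine ⟨P', fun C hC => hC.1, ?_⟩
  ext M
  simp only [Set.mem_setOf_eq, IsStable]
  rw [key M]
end

section
/- Let P be a normal propositional logic program and let T be a candidate theory for P. Then every propositional model M of T is a stable model of P. -/
/-- A candidate theory for `P` is encoded by a choice `se` of one subequation per atom:
`se p = none` represents the subequation `¬ p`, and `se p = some S` represents the
subequation `p ⇔ ⋀_{q ∈ S} ¬ q`, where `S` must be a support of `p` with respect to `P`. -/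
def IsCandidateTheory {At : Type} [DecidableEq At] (P : Set (Clause At))
    (se : At → Option (Finset At)) : Prop :=
  ∀ p S, se p = some S → HasGRProof P p S

/-- `M` is a propositional model of the candidate theory: `M` satisfies every clause of `P`
(read as a propositional formula) and every chosen subequation. -/
def SatCandidate {At : Type} (P : Set (Clause At))
    (se : At → Option (Finset At)) (M : Set At) : Prop :=
  IsModel P M ∧
    ∀ p, (se p = none → p ∉ M) ∧
      ∀ S, se p = some S → (p ∈ M ↔ ∀ r ∈ S, r ∉ M)

lemma gr_sound {At : Type} [DecidableEq At] (P : Set (Clause At)) (M : Set At)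
    (hMod : IsModel P M) {t : GTree At} (ht : IsGRProof P t)
    (hg : Admits M t.label.guard) (hb : ∀ q ∈ t.label.body, GLop P M q) :
    GLop P M t.label.head := by
  induction ht with
  | leaf L C hC hL =>
      subst hL
      exact GLop.step C hC hg hb
  | node t₁ t₂ h₁ h₂ q hq ha hhead ih₁ ih₂ =>
      simp only [GTree.label] at hg hb ⊢
      have hg₁ : Admits M t₁.label.guard := fun r hr => hg r (Finset.mem_union_left _ hr)
      have hg₂ : Admits M t₂.label.guard := fun r hr => hg r (Finset.mem_union_right _ hr)
      have hq2 : GLop P M q := by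
        have := ih₂ hg₂ (by simp [ha])
        rwa [hhead] at this
      exact ih₁ hg₁ (fun x hx => by
        rcases eq_or_ne x q with rfl | hne
        · exact hq2
        · exact hb x (Finset.mem_erase.mpr ⟨hne, hx⟩))

theorem candidate_model_is_stable {At : Type} [DecidableEq At]
    (P : Set (Clause At)) (se : At → Option (Finset At))
    (hT : IsCandidateTheory P se) (M : Set At) (hM : SatCandidate P se M) :
    IsStable P M := by
  obtain ⟨hMod, hse⟩ := hM
  ext p
  simp only [Set.mem_setOf_eq]
  constructor
  · intro h
    induction h with
    | step C hC hneg hpos ih => exact hMod C hC ⟨ih, hneg⟩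
  · intro hp
    cases h : se p with
    | none => exact absurd hp ((hse p).1 h)
    | some S =>
        obtain ⟨t, ht, hl⟩ := hT p S h
        have hadm : Admits M S := ((hse p).2 S h).mp hp
        have := gr_sound P M hMod ht (by rw [hl]; exact hadm) (by rw [hl]; simp)
        rwa [hl] at this
end
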